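/- arXiv:1808.08712 — 6 statements merged into one kernel-verified Lean document; each statement's English description precedes it below -/
import Mathlib

section
/- Let Θ be a nonempty index set and (κ_θ)_{θ∈Θ} a family of Markov kernels on ℝ^d, and define the nonlinear Markov operator P̄f(x) = sup_{θ∈Θ} ∫_{ℝ^d} f(y) κ_θ(x,dy) for bounded Borel measurable f ≥ 0. Suppose Φ : [0,∞) → [0,∞) is C¹, increasing, with Φ'(1) > 0 and lim_{r→∞} Φ(r) = ∞, and Ψ : ℝ^d × ℝ^d → [0,∞) satisfies lim_{y→x} (Ψ(x,y) + Ψ(y,x)) = 0 for every x ∈ ℝ^d. If the Harnack-type inequality Φ(P̄f(x)) ≤ P̄(Φ∘f)(y)·e^{Ψ(x,y)} holds for all bounded Borel measurable f ≥ 0 and all x, y ∈ ℝ^d, then P̄ is strong Feller: for every bounded Borel measurable f ≥ 0, the function x ↦ P̄f(x) is continuous on ℝ^d. -/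
open MeasureTheory ProbabilityTheory Filter

/-- The nonlinear Markov operator `P̄ f x = ⨆ θ, ∫ f dκ_θ(x,·)` associated with a family
of Markov kernels on `ℝ^d`. -/
noncomputable def nlOp {d : ℕ} {Θ : Type*}
    (κ : Θ → Kernel (EuclideanSpace ℝ (Fin d)) (EuclideanSpace ℝ (Fin d)))
    (f : EuclideanSpace ℝ (Fin d) → ℝ) (x : EuclideanSpace ℝ (Fin d)) : ℝ :=
  ⨆ θ, ∫ y, f y ∂(κ θ x)

/-!
Apply the Harnack inequality to `1 + ε f`. Near `1` the map `Φ` is almost linear with slope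
`Φ' 1 > 0`, and `P̄ (1 + ε f) = 1 + ε P̄ f`, so for `ε` small the inequality linearizes: for every
`s < 1` there is `C` with `C + s P̄f(x) ≤ (C + P̄f(y)) e^{Ψ(x,y)}` for all `x, y`. Letting `y → x`
(in either slot, so `Ψ → 0`) and then `s → 1` gives lower and upper semicontinuity of `P̄ f`.
-/

open Set Topology

lemma ContinuousOn.measurable_comp {α β γ : Type*} [MeasurableSpace α] [TopologicalSpace β]
    [MeasurableSpace β] [OpensMeasurableSpace β] [TopologicalSpace γ] [MeasurableSpace γ]
    [BorelSpace γ] {Φ : β → γ} {s : Set β} (hΦ : ContinuousOn Φ s) {g : α → β}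
    (hg : Measurable g) (hgs : ∀ z, g z ∈ s) : Measurable fun z => Φ (g z) :=
  hΦ.domRestrict.measurable.comp (hg.subtype_mk (h := hgs))

section SupIntegral

variable {α Θ : Type*} [MeasurableSpace α] {μ : Θ → Measure α}
  [∀ θ, IsProbabilityMeasure (μ θ)]

lemma bddAbove_range_integral {f : α → ℝ} {C : ℝ} (hfC : ∀ y, |f y| ≤ C) :
    BddAbove (range fun θ => ∫ y, f y ∂μ θ) := by
  refine ⟨C, forall_mem_range.2 fun θ => ?_⟩
  have := norm_integral_le_of_norm_le_const (μ := μ θ) (f := f) (ae_of_all _ hfC)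
  simp only [Real.norm_eq_abs, probReal_univ, mul_one] at this
  exact (le_abs_self _).trans this

lemma integrable_of_abs_le {ν : Measure α} [IsFiniteMeasure ν] {f : α → ℝ} {C : ℝ}
    (hf : Measurable f) (hfC : ∀ y, |f y| ≤ C) : Integrable f ν :=
  .of_bound (f := f) hf.aestronglyMeasurable C (ae_of_all _ hfC)

lemma iSup_integral_mono {f g : α → ℝ} {C D : ℝ} (hf : Measurable f) (hfC : ∀ y, |f y| ≤ C)
    (hg : Measurable g) (hgD : ∀ y, |g y| ≤ D) (hfg : f ≤ g) :
    ⨆ θ, ∫ y, f y ∂μ θ ≤ ⨆ θ, ∫ y, g y ∂μ θ :=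
  ciSup_mono (bddAbove_range_integral hgD) fun _ =>
    integral_mono (integrable_of_abs_le hf hfC) (integrable_of_abs_le hg hgD) hfg

lemma iSup_integral_const_add_mul [Nonempty Θ] {f : α → ℝ} {C : ℝ} (hf : Measurable f)
    (hfC : ∀ y, |f y| ≤ C) (c : ℝ) {t : ℝ} (ht : 0 ≤ t) :
    ⨆ θ, ∫ y, c + t * f y ∂μ θ = c + t * ⨆ θ, ∫ y, f y ∂μ θ := by
  have hint : ∀ θ, ∫ y, c + t * f y ∂μ θ = c + t * ∫ y, f y ∂μ θ := fun θ => by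
    rw [integral_add (integrable_const c) ((integrable_of_abs_le hf hfC).const_mul t),
      integral_const_mul]
    simp
  simp only [hint]
  exact ((monotone_id.const_mul ht).const_add c).map_ciSup_of_continuousAt
    (by fun_prop) (bddAbove_range_integral hfC) |>.symm

end SupIntegral

lemma mul_sub_le_sub_le_mul_sub_of_hasDerivAt {Φ Φ' : ℝ → ℝ} {a b m₁ m₂ : ℝ}
    (hΦ : ∀ r ∈ Icc a b, HasDerivAt Φ (Φ' r) r) (hΦ' : MapsTo Φ' (Icc a b) (Icc m₁ m₂))
    {y : ℝ} (hy : y ∈ Icc a b) :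
    m₁ * (y - a) ≤ Φ y - Φ a ∧ Φ y - Φ a ≤ m₂ * (y - a) := by
  have hcont : ContinuousOn Φ (Icc a b) := fun r hr => (hΦ r hr).continuousAt.continuousWithinAt
  have hdiff : DifferentiableOn ℝ Φ (interior (Icc a b)) := fun r hr =>
    (hΦ r (interior_subset hr)).differentiableAt.differentiableWithinAt
  have hderiv : ∀ r ∈ interior (Icc a b), deriv Φ r ∈ Icc m₁ m₂ := fun r hr => by
    rw [(hΦ r (interior_subset hr)).deriv]; exact hΦ' (interior_subset hr)
  have ha : a ∈ Icc a b := ⟨le_rfl, hy.1.trans hy.2⟩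
  exact ⟨(convex_Icc a b).mul_sub_le_image_sub_of_le_deriv hcont hdiff
      (fun r hr => (hderiv r hr).1) a ha y hy hy.1,
    (convex_Icc a b).image_sub_le_mul_sub_of_deriv_le hcont hdiff
      (fun r hr => (hderiv r hr).2) a ha y hy hy.1⟩

lemma ContinuousAt.exists_mapsTo_Icc_of_mem_Ioo {g : ℝ → ℝ} {a m₁ m₂ : ℝ}
    (hg : ContinuousAt g a) (h : g a ∈ Ioo m₁ m₂) : ∃ b, a < b ∧ MapsTo g (Icc a b) (Icc m₁ m₂) :=
  mem_nhdsGE_iff_exists_Icc_subset.1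
    (mem_nhdsWithin_of_mem_nhds (hg.preimage_mem_nhds (Icc_mem_nhds h.1 h.2)))

section Semicontinuity

variable {X : Type*} [TopologicalSpace X] {u : X → ℝ} {Ψ : X → X → ℝ}

lemma exists_mem_Ioo_lt_mul {a c : ℝ} (h : c < a) : ∃ s ∈ Ioo (0:ℝ) 1, c < s * a := by
  have hlim : Tendsto (fun s : ℝ => s * a) (𝓝[<] 1) (𝓝 a) :=
    ((continuous_mul_const a).tendsto' 1 a (one_mul a)).mono_left nhdsWithin_le_nhds
  obtain ⟨s, hcs, hs⟩ :=
    ((hlim.eventually (lt_mem_nhds h)).and (Ioo_mem_nhdsLT zero_lt_one)).exists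
  exact ⟨s, hs, hcs⟩

lemma lowerSemicontinuous_of_harnack (hΨ : ∀ x, Tendsto (Ψ x) (𝓝 x) (𝓝 0))
    (h : ∀ s ∈ Ioo (0:ℝ) 1, ∃ C, ∀ x y, C + s * u x ≤ (C + u y) * Real.exp (Ψ x y)) :
    LowerSemicontinuous u := by
  intro x c hc
  obtain ⟨s, hs, hcs⟩ := exists_mem_Ioo_lt_mul hc
  obtain ⟨C, hC⟩ := h s hs
  have hlim : Tendsto (fun y => (C + s * u x) * Real.exp (-Ψ x y) - C) (𝓝 x) (𝓝 (s * u x)) := by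
    simpa using ((tendsto_const_nhds (x := C + s * u x)).mul (hΨ x).neg.rexp).sub_const C
  filter_upwards [hlim.eventually (lt_mem_nhds hcs)] with y hy
  have := (mul_inv_le_iff₀ (Real.exp_pos (Ψ x y))).2 (hC x y)
  rw [Real.exp_neg] at hy
  linarith

lemma upperSemicontinuous_of_harnack (hΨ : ∀ x, Tendsto (fun y => Ψ y x) (𝓝 x) (𝓝 0))
    (h : ∀ s ∈ Ioo (0:ℝ) 1, ∃ C, ∀ x y, C + s * u x ≤ (C + u y) * Real.exp (Ψ x y)) :
    UpperSemicontinuous u := by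
  intro x c hc
  obtain ⟨s, hs, hcs⟩ := exists_mem_Ioo_lt_mul hc
  obtain ⟨C, hC⟩ := h s hs
  have hlim : Tendsto (fun y => (C + u x) * Real.exp (Ψ y x) - C) (𝓝 x) (𝓝 (u x)) := by
    simpa using ((tendsto_const_nhds (x := C + u x)).mul (hΨ x).rexp).sub_const C
  filter_upwards [hlim.eventually (gt_mem_nhds hcs)] with y hy
  have : s * u y < s * c := by linarith [hC y x]
  exact lt_of_mul_lt_mul_left this hs.1.le

end Semicontinuity

section Harnack

variable {d : ℕ} {Θ : Type*}
  {κ : Θ → Kernel (EuclideanSpace ℝ (Fin d)) (EuclideanSpace ℝ (Fin d))}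
  [∀ θ, IsMarkovKernel (κ θ)]

lemma nlOp_const [Nonempty Θ] (c : ℝ) : nlOp κ (fun _ => c) = fun _ => c :=
  funext fun _ => by simp [nlOp]

lemma nlOp_mono {f g : EuclideanSpace ℝ (Fin d) → ℝ} {C D : ℝ} (hf : Measurable f)
    (hfC : ∀ y, |f y| ≤ C) (hg : Measurable g) (hgD : ∀ y, |g y| ≤ D) (hfg : f ≤ g) :
    nlOp κ f ≤ nlOp κ g :=
  fun _ => iSup_integral_mono hf hfC hg hgD hfg

variable [Nonempty Θ]

lemma nlOp_const_add_mul {f : EuclideanSpace ℝ (Fin d) → ℝ} {C : ℝ} (hf : Measurable f)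
    (hfC : ∀ y, |f y| ≤ C) (c : ℝ) {t : ℝ} (ht : 0 ≤ t) :
    nlOp κ (fun z => c + t * f z) = fun x => c + t * nlOp κ f x :=
  funext fun _ => iSup_integral_const_add_mul hf hfC c ht

lemma nlOp_mem_Icc {f : EuclideanSpace ℝ (Fin d) → ℝ} {K : ℝ} (hf : Measurable f)
    (hf0 : ∀ y, 0 ≤ f y) (hfK : ∀ y, f y ≤ K) (x : EuclideanSpace ℝ (Fin d)) :
    nlOp κ f x ∈ Icc 0 K := by
  have hfb : ∀ y, |f y| ≤ K := fun y => (abs_of_nonneg (hf0 y)).trans_le (hfK y)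
  have h0 := nlOp_mono (κ := κ) measurable_const (fun _ => le_rfl) hf hfb hf0 x
  have hK := nlOp_mono (κ := κ) hf hfb measurable_const (fun _ => le_rfl) hfK x
  simp only [nlOp_const] at h0 hK
  exact ⟨h0, hK⟩

lemma nlOp_harnack_one_add_mul {Φ Φ' : ℝ → ℝ} {b m₁ m₂ : ℝ} (hm₂ : 0 ≤ m₂)
    (hΦ : ∀ r ∈ Icc 1 b, HasDerivAt Φ (Φ' r) r) (hΦ' : MapsTo Φ' (Icc 1 b) (Icc m₁ m₂))
    {f : EuclideanSpace ℝ (Fin d) → ℝ} {K : ℝ} (hf : Measurable f) (hf0 : ∀ y, 0 ≤ f y)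
    (hfK : ∀ y, f y ≤ K) {ε : ℝ} (hε : 0 ≤ ε) (hεK : ε * K ≤ b - 1)
    {x y : EuclideanSpace ℝ (Fin d)} {E : ℝ} (hE : 0 ≤ E)
    (hHarnack : Φ (nlOp κ (fun z => 1 + ε * f z) x) ≤
      nlOp κ (fun z => Φ (1 + ε * f z)) y * E) :
    Φ 1 + m₁ * (ε * nlOp κ f x) ≤ (Φ 1 + m₂ * (ε * nlOp κ f y)) * E := by
  have hfb : ∀ z, |f z| ≤ K := fun z => (abs_of_nonneg (hf0 z)).trans_le (hfK z)
  have hmem : ∀ t ∈ Icc 0 K, 1 + ε * t ∈ Icc 1 b := fun t ht =>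
    ⟨by nlinarith [ht.1], by nlinarith [ht.2]⟩
  have hbounds : ∀ t ∈ Icc 0 K, m₁ * (ε * t) ≤ Φ (1 + ε * t) - Φ 1 ∧
      Φ (1 + ε * t) - Φ 1 ≤ m₂ * (ε * t) := fun t ht => by
    simpa using mul_sub_le_sub_le_mul_sub_of_hasDerivAt hΦ hΦ' (hmem t ht)
  have hfmem : ∀ z, f z ∈ Icc 0 K := fun z => ⟨hf0 z, hfK z⟩
  obtain ⟨B, hB⟩ := isCompact_Icc.exists_bound_of_continuousOn
    fun r hr => (hΦ r hr).continuousAt.continuousWithinAt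
  have hΦg : Measurable fun z => Φ (1 + ε * f z) :=
    ContinuousOn.measurable_comp (fun r hr => (hΦ r hr).continuousAt.continuousWithinAt)
      (by fun_prop) fun z => hmem _ (hfmem z)
  have hupper : Measurable fun z => Φ 1 + m₂ * ε * f z := by fun_prop
  have hupper_bound : ∀ z, |Φ 1 + m₂ * ε * f z| ≤ |Φ 1| + m₂ * ε * K := fun z => by
    have h0 : 0 ≤ m₂ * ε * f z := mul_nonneg (mul_nonneg hm₂ hε) (hf0 z)
    have hK : m₂ * ε * f z ≤ m₂ * ε * K := mul_le_mul_of_nonneg_left (hfK z) (mul_nonneg hm₂ hε)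
    exact abs_le.2 ⟨by linarith [neg_abs_le (Φ 1)], by linarith [le_abs_self (Φ 1)]⟩
  have hmono : nlOp κ (fun z => Φ (1 + ε * f z)) y ≤ nlOp κ (fun z => Φ 1 + m₂ * ε * f z) y :=
    nlOp_mono hΦg (fun z => by simpa using hB _ (hmem _ (hfmem z))) hupper hupper_bound
      (fun z => by linarith [(hbounds _ (hfmem z)).2]) y
  calc Φ 1 + m₁ * (ε * nlOp κ f x)
      ≤ Φ (1 + ε * nlOp κ f x) := by
        linarith [(hbounds _ (nlOp_mem_Icc (κ := κ) hf hf0 hfK x)).1]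
    _ = Φ (nlOp κ (fun z => 1 + ε * f z) x) := by rw [nlOp_const_add_mul hf hfb 1 hε]
    _ ≤ nlOp κ (fun z => Φ (1 + ε * f z)) y * E := hHarnack
    _ ≤ nlOp κ (fun z => Φ 1 + m₂ * ε * f z) y * E := mul_le_mul_of_nonneg_right hmono hE
    _ = (Φ 1 + m₂ * (ε * nlOp κ f y)) * E := by
      rw [nlOp_const_add_mul hf hfb _ (mul_nonneg hm₂ hε)]; ring

lemma nlOp_harnack_linearized {Φ Φ' : ℝ → ℝ}
    {Ψ : EuclideanSpace ℝ (Fin d) → EuclideanSpace ℝ (Fin d) → ℝ}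
    (hΦ : ∀ r ∈ Ici (0:ℝ), HasDerivWithinAt Φ (Φ' r) (Ici 0) r)
    (hΦ'cont : ContinuousOn Φ' (Ici 0)) (hΦ'1 : 0 < Φ' 1)
    (hHarnack : ∀ f : EuclideanSpace ℝ (Fin d) → ℝ, Measurable f → (∀ y, 0 ≤ f y) →
      (∃ C, ∀ y, f y ≤ C) → ∀ x y,
      Φ (nlOp κ f x) ≤ nlOp κ (fun z => Φ (f z)) y * Real.exp (Ψ x y))
    {f : EuclideanSpace ℝ (Fin d) → ℝ} {K : ℝ} (hf : Measurable f) (hf0 : ∀ y, 0 ≤ f y)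
    (hfK : ∀ y, f y ≤ K) {s : ℝ} (hs : s ∈ Ioo 0 1) :
    ∃ C, ∀ x y, C + s * nlOp κ f x ≤ (C + nlOp κ f y) * Real.exp (Ψ x y) := by
  obtain ⟨hs0, hs1⟩ := hs
  set m := Φ' 1 * (1 + s) / (2 * s)
  have hm : 0 < m := by positivity
  have hsm : s * m = Φ' 1 * (1 + s) / 2 := by simp only [m]; field_simp
  have hΦ'1_mem : Φ' 1 ∈ Ioo (s * m) m := by
    constructor
    · rw [hsm]; nlinarith
    · rw [lt_div_iff₀ (by positivity)]; nlinarith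
  obtain ⟨b, hb, hΦ'b⟩ :=
    (hΦ'cont.continuousAt (Ici_mem_nhds one_pos)).exists_mapsTo_Icc_of_mem_Ioo hΦ'1_mem
  have hΦb : ∀ r ∈ Icc 1 b, HasDerivAt Φ (Φ' r) r := fun r hr =>
    (hΦ r (zero_le_one.trans hr.1)).hasDerivAt (Ici_mem_nhds (zero_lt_one.trans_le hr.1))
  have hK : 0 ≤ K := (hf0 0).trans (hfK 0)
  set ε := (b - 1) / (K + 1)
  have hε : 0 < ε := div_pos (by linarith) (by linarith)
  have hεK : ε * K ≤ b - 1 := by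
    rw [div_mul_eq_mul_div, div_le_iff₀ (by linarith)]; nlinarith
  refine ⟨Φ 1 / (m * ε), fun x y => ?_⟩
  have hg0 : ∀ z, 0 ≤ 1 + ε * f z := fun z => add_nonneg zero_le_one (mul_nonneg hε.le (hf0 z))
  have key := nlOp_harnack_one_add_mul hm.le hΦb hΦ'b hf hf0 hfK hε.le hεK
    (Real.exp_pos (Ψ x y)).le
    (hHarnack _ (by fun_prop) hg0 ⟨1 + ε * K, fun z => by gcongr; exact hfK z⟩ x y)
  have hmε : 0 < m * ε := mul_pos hm hε
  calc Φ 1 / (m * ε) + s * nlOp κ f x = (Φ 1 + s * m * (ε * nlOp κ f x)) / (m * ε) := by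
        field_simp
    _ ≤ (Φ 1 + m * (ε * nlOp κ f y)) * Real.exp (Ψ x y) / (m * ε) := by gcongr
    _ = (Φ 1 / (m * ε) + nlOp κ f y) * Real.exp (Ψ x y) := by field_simp

end Harnack

theorem stmt_0_general {d : ℕ} {Θ : Type*} [Nonempty Θ]
    (κ : Θ → Kernel (EuclideanSpace ℝ (Fin d)) (EuclideanSpace ℝ (Fin d)))
    (hκ : ∀ θ, IsMarkovKernel (κ θ))
    (Φ : ℝ → ℝ) (Φ' : ℝ → ℝ)
    (hΦderiv : ∀ r ∈ Set.Ici (0:ℝ), HasDerivWithinAt Φ (Φ' r) (Set.Ici 0) r)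
    (hΦ'cont : ContinuousOn Φ' (Set.Ici 0))
    (hΦ'1 : 0 < Φ' 1)
    (Ψ : EuclideanSpace ℝ (Fin d) → EuclideanSpace ℝ (Fin d) → ℝ)
    (hΨnonneg : ∀ x y, 0 ≤ Ψ x y)
    (hΨlim : ∀ x, Tendsto (fun y => Ψ x y + Ψ y x) (nhds x) (nhds 0))
    (hHarnack : ∀ f : EuclideanSpace ℝ (Fin d) → ℝ, Measurable f → (∀ y, 0 ≤ f y) →
      (∃ C, ∀ y, f y ≤ C) → ∀ x y,
      Φ (nlOp κ f x) ≤ nlOp κ (fun z => Φ (f z)) y * Real.exp (Ψ x y)) :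
    ∀ f : EuclideanSpace ℝ (Fin d) → ℝ, Measurable f → (∀ y, 0 ≤ f y) →
      (∃ C, ∀ y, f y ≤ C) → Continuous (nlOp κ f) := by
  intro f hf hf0 ⟨K, hfK⟩
  have hΨleft : ∀ x, Tendsto (Ψ x) (𝓝 x) (𝓝 0) := fun x =>
    squeeze_zero (hΨnonneg x) (fun y => le_add_of_nonneg_right (hΨnonneg y x)) (hΨlim x)
  have hΨright : ∀ x, Tendsto (fun y => Ψ y x) (𝓝 x) (𝓝 0) := fun x =>
    squeeze_zero (fun y => hΨnonneg y x) (fun y => le_add_of_nonneg_left (hΨnonneg x y))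
      (hΨlim x)
  have := hκ
  have hlin := fun s (hs : s ∈ Ioo (0:ℝ) 1) =>
    nlOp_harnack_linearized hΦderiv hΦ'cont hΦ'1 hHarnack hf hf0 hfK hs
  exact continuous_iff_lower_upperSemicontinuous.2
    ⟨lowerSemicontinuous_of_harnack hΨleft hlin, upperSemicontinuous_of_harnack hΨright hlin⟩

theorem stmt_0 {d : ℕ} {Θ : Type*} [Nonempty Θ]
    (κ : Θ → Kernel (EuclideanSpace ℝ (Fin d)) (EuclideanSpace ℝ (Fin d)))
    (hκ : ∀ θ, IsMarkovKernel (κ θ))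
    (Φ : ℝ → ℝ) (Φ' : ℝ → ℝ)
    (hΦmono : MonotoneOn Φ (Set.Ici 0))
    (hΦnonneg : ∀ r ∈ Set.Ici (0:ℝ), 0 ≤ Φ r)
    (hΦderiv : ∀ r ∈ Set.Ici (0:ℝ), HasDerivWithinAt Φ (Φ' r) (Set.Ici 0) r)
    (hΦ'cont : ContinuousOn Φ' (Set.Ici 0))
    (hΦ'1 : 0 < Φ' 1)
    (hΦtop : Tendsto Φ atTop atTop)
    (Ψ : EuclideanSpace ℝ (Fin d) → EuclideanSpace ℝ (Fin d) → ℝ)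
    (hΨnonneg : ∀ x y, 0 ≤ Ψ x y)
    (hΨlim : ∀ x, Tendsto (fun y => Ψ x y + Ψ y x) (nhds x) (nhds 0))
    (hHarnack : ∀ f : EuclideanSpace ℝ (Fin d) → ℝ, Measurable f → (∀ y, 0 ≤ f y) →
      (∃ C, ∀ y, f y ≤ C) → ∀ x y,
      Φ (nlOp κ f x) ≤ nlOp κ (fun z => Φ (f z)) y * Real.exp (Ψ x y)) :
    ∀ f : EuclideanSpace ℝ (Fin d) → ℝ, Measurable f → (∀ y, 0 ≤ f y) →
      (∃ C, ∀ y, f y ≤ C) → Continuous (nlOp κ f) :=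
  stmt_0_general κ hκ Φ Φ' hΦderiv hΦ'cont hΦ'1 Ψ hΨnonneg hΨlim hHarnack
end

section
/- Let Θ be a nonempty index set and (κ_θ)_{θ∈Θ} a family of Markov kernels on ℝ^d with nonlinear Markov operator P̄f(x) = sup_{θ∈Θ} ∫ f dκ_θ(x,·); assume x ↦ P̄f(x) is Borel measurable for every bounded Borel measurable f ≥ 0. Let Φ : [0,∞) → [0,∞) be increasing with lim_{r→∞} Φ(r) = ∞ and let Ψ : ℝ^d × ℝ^d → [0,∞) be Borel measurable, and assume the Harnack-type inequality Φ(P̄f(x)) ≤ P̄(Φ∘f)(y)·e^{Ψ(x,y)} for all bounded Borel measurable f ≥ 0 and all x, y ∈ ℝ^d. If μ is a quasi-invariant linear expectation of P̄, then for every Borel set A ⊆ ℝ^d with μ(A) = 0 one has P̄1_A ≡ 0, i.e. κ_θ(x, A) = 0 for every θ ∈ Θ and x ∈ ℝ^d; consequently every kernel κ_θ(x,·) is absolutely continuous with respect to μ. -/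
open MeasureTheory ProbabilityTheory Filter

lemma aux_integrable {α : Type*} [MeasurableSpace α] (ν : Measure α) [IsFiniteMeasure ν]
    {f : α → ℝ} (hf : Measurable f) {C : ℝ} (h0 : ∀ z, 0 ≤ f z) (hC : ∀ z, f z ≤ C) :
    Integrable f ν := by
  refine ⟨hf.aestronglyMeasurable, ?_⟩
  refine HasFiniteIntegral.of_bounded (C := C) (ae_of_all _ fun z => ?_)
  rw [Real.norm_eq_abs, abs_of_nonneg (h0 z)]; exact hC z

lemma aux_integral_le {α : Type*} [MeasurableSpace α] (ν : Measure α) [IsProbabilityMeasure ν]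
    {f : α → ℝ} (hf : Measurable f) {C : ℝ} (h0 : ∀ z, 0 ≤ f z) (hC : ∀ z, f z ≤ C) :
    ∫ z, f z ∂ν ≤ C := by
  calc ∫ z, f z ∂ν ≤ ∫ _, C ∂ν :=
        integral_mono (aux_integrable ν hf h0 hC) (integrable_const C) hC
    _ = C := by simp

lemma aux_bddAbove {d : ℕ} {Θ : Type*} [Nonempty Θ]
    (κ : Θ → Kernel (EuclideanSpace ℝ (Fin d)) (EuclideanSpace ℝ (Fin d)))
    [∀ θ, IsMarkovKernel (κ θ)]
    {f : EuclideanSpace ℝ (Fin d) → ℝ} (hf : Measurable f) {C : ℝ}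
    (h0 : ∀ z, 0 ≤ f z) (hC : ∀ z, f z ≤ C) (x : EuclideanSpace ℝ (Fin d)) :
    BddAbove (Set.range fun θ => ∫ y, f y ∂(κ θ x)) := by
  refine ⟨C, ?_⟩
  rintro _ ⟨θ, rfl⟩
  exact aux_integral_le (κ θ x) hf h0 hC

theorem stmt_1 {d : ℕ} {Θ : Type*} [Nonempty Θ]
    (κ : Θ → Kernel (EuclideanSpace ℝ (Fin d)) (EuclideanSpace ℝ (Fin d)))
    (hκ : ∀ θ, IsMarkovKernel (κ θ))
    (hPmeas : ∀ f : EuclideanSpace ℝ (Fin d) → ℝ, Measurable f → (∀ y, 0 ≤ f y) →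
      (∃ C, ∀ y, f y ≤ C) → Measurable (nlOp κ f))
    (Φ : ℝ → ℝ)
    (hΦmono : MonotoneOn Φ (Set.Ici 0))
    (hΦnonneg : ∀ r ∈ Set.Ici (0:ℝ), 0 ≤ Φ r)
    (hΦtop : Tendsto Φ atTop atTop)
    (Ψ : EuclideanSpace ℝ (Fin d) → EuclideanSpace ℝ (Fin d) → ℝ)
    (hΨmeas : Measurable (Function.uncurry Ψ))
    (hΨnonneg : ∀ x y, 0 ≤ Ψ x y)
    (hHarnack : ∀ f : EuclideanSpace ℝ (Fin d) → ℝ, Measurable f → (∀ y, 0 ≤ f y) →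
      (∃ C, ∀ y, f y ≤ C) → ∀ x y,
      Φ (nlOp κ f x) ≤ nlOp κ (fun z => Φ (f z)) y * Real.exp (Ψ x y))
    (μ : Measure (EuclideanSpace ℝ (Fin d))) [IsProbabilityMeasure μ]
    -- μ is a quasi-invariant linear expectation of P̄, with witness g
    (g : EuclideanSpace ℝ (Fin d) → ℝ) (hgmeas : Measurable g)
    (hg0 : ∀ x, 0 ≤ g x) (hgbd : ∃ C, ∀ x, g x ≤ C)
    (hquasi : ∀ f : EuclideanSpace ℝ (Fin d) → ℝ, Measurable f → (∀ y, 0 ≤ f y) →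
      (∃ C, ∀ y, f y ≤ C) → ∫ x, nlOp κ f x ∂μ ≤ ∫ x, g x * f x ∂μ) :
    (∀ A : Set (EuclideanSpace ℝ (Fin d)), MeasurableSet A → μ A = 0 →
      ∀ θ x, κ θ x A = 0) ∧
    (∀ θ x, κ θ x ≪ μ) := by
  haveI : ∀ θ, IsMarkovKernel (κ θ) := hκ
  have key : ∀ A : Set (EuclideanSpace ℝ (Fin d)), MeasurableSet A → μ A = 0 →
      ∀ θ x, κ θ x A = 0 := by
    intro A hA hμA
    set f₁ : EuclideanSpace ℝ (Fin d) → ℝ := A.indicator 1 with hf₁def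
    have hf₁meas : Measurable f₁ := measurable_one.indicator hA
    have hf₁0 : ∀ z, 0 ≤ f₁ z := fun z => Set.indicator_nonneg (fun _ _ => zero_le_one) z
    have hf₁le : ∀ z, f₁ z ≤ 1 := by
      intro z
      by_cases hz : z ∈ A <;> simp [f₁, Set.indicator, hz]
    have hf₁notmem : ∀ z, z ∉ A → f₁ z = 0 := fun z hz => Set.indicator_of_notMem hz _
    have hint : ∀ θ (x : EuclideanSpace ℝ (Fin d)),
        ∫ z, f₁ z ∂(κ θ x) = (κ θ x A).toReal := fun θ x => integral_indicator_one hA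
    -- Step 1: find y with κ θ y A = 0 for all θ
    have h1 := hquasi f₁ hf₁meas hf₁0 ⟨1, hf₁le⟩
    have h2 : (fun x => g x * f₁ x) =ᵐ[μ] fun _ => 0 := by
      rw [Filter.EventuallyEq, ae_iff]
      refine measure_mono_null (fun z hz => ?_) hμA
      simp only [Set.mem_setOf_eq] at hz
      by_contra hzA
      exact hz (by rw [hf₁notmem z hzA, mul_zero])
    have h3 : ∫ x, g x * f₁ x ∂μ = 0 := by rw [integral_congr_ae h2, integral_zero]
    have hnl_meas : Measurable (nlOp κ f₁) := hPmeas f₁ hf₁meas hf₁0 ⟨1, hf₁le⟩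
    have hbdd : ∀ x : EuclideanSpace ℝ (Fin d),
        BddAbove (Set.range fun θ => ∫ y, f₁ y ∂(κ θ x)) :=
      aux_bddAbove κ hf₁meas hf₁0 hf₁le
    have hnl_nonneg : ∀ x, 0 ≤ nlOp κ f₁ x := by
      intro x
      obtain ⟨θ⟩ := ‹Nonempty Θ›
      exact le_trans (integral_nonneg hf₁0) (le_ciSup (hbdd x) θ)
    have hnl_le : ∀ x, nlOp κ f₁ x ≤ 1 := fun x =>
      ciSup_le fun θ => aux_integral_le (κ θ x) hf₁meas hf₁0 hf₁le
    have hnl_int : Integrable (nlOp κ f₁) μ := aux_integrable μ hnl_meas hnl_nonneg hnl_le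
    have h4 : ∫ x, nlOp κ f₁ x ∂μ = 0 :=
      le_antisymm (h1.trans h3.le) (integral_nonneg hnl_nonneg)
    have h5 : (nlOp κ f₁) =ᵐ[μ] 0 :=
      (integral_eq_zero_iff_of_nonneg hnl_nonneg hnl_int).mp h4
    obtain ⟨y, hy⟩ := h5.exists
    simp only [Pi.zero_apply] at hy
    have hκy : ∀ θ, κ θ y A = 0 := by
      intro θ
      have h6 : ∫ z, f₁ z ∂(κ θ y) ≤ 0 := hy ▸ le_ciSup (hbdd y) θ
      rw [hint θ y] at h6
      have h7 : (κ θ y A).toReal = 0 := le_antisymm h6 ENNReal.toReal_nonneg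
      exact (ENNReal.toReal_eq_zero_iff _).mp h7 |>.resolve_right (measure_ne_top _ _)
    -- Step 2
    intro θ x
    by_contra hne
    have ht : 0 < (κ θ x A).toReal := ENNReal.toReal_pos hne (measure_ne_top _ _)
    set t := (κ θ x A).toReal with htdef
    set B := Φ 0 * Real.exp (Ψ x y) with hB
    have hbound : ∀ n : ℕ, Φ ((n : ℝ) * t) ≤ B := by
      intro n
      set fn : EuclideanSpace ℝ (Fin d) → ℝ := fun z => (n : ℝ) * f₁ z with hfndef
      have hfnmeas : Measurable fn := hf₁meas.const_mul _
      have hfn0 : ∀ z, 0 ≤ fn z := fun z => mul_nonneg (Nat.cast_nonneg n) (hf₁0 z)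
      have hfnle : ∀ z, fn z ≤ (n : ℝ) := fun z => by
        calc (n : ℝ) * f₁ z ≤ (n : ℝ) * 1 :=
              mul_le_mul_of_nonneg_left (hf₁le z) (Nat.cast_nonneg n)
          _ = n := mul_one _
      have har := hHarnack fn hfnmeas hfn0 ⟨n, hfnle⟩ x y
      -- RHS equals Φ 0
      have hr : ∀ θ', ∫ z, Φ (fn z) ∂(κ θ' y) = Φ 0 := by
        intro θ'
        have heq : (fun z => Φ (fn z)) =ᵐ[κ θ' y] fun _ => Φ 0 := by
          rw [Filter.EventuallyEq, ae_iff]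
          refine measure_mono_null (fun z hz => ?_) (hκy θ')
          simp only [Set.mem_setOf_eq] at hz
          by_contra hzA
          exact hz (by rw [hfndef]; simp [hf₁notmem z hzA])
        rw [integral_congr_ae heq, integral_const]
        simp
      have hRHS : nlOp κ (fun z => Φ (fn z)) y = Φ 0 := by
        unfold nlOp
        simp only [hr]
        exact ciSup_const
      rw [hRHS] at har
      -- LHS bound
      have hbddn : BddAbove (Set.range fun θ' => ∫ z, fn z ∂(κ θ' x)) :=
        aux_bddAbove κ hfnmeas hfn0 hfnle x
      have hintn : ∫ z, fn z ∂(κ θ x) = (n : ℝ) * t := by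
        rw [hfndef]
        rw [integral_const_mul, hint θ x]
      have hle : (n : ℝ) * t ≤ nlOp κ fn x := hintn ▸ le_ciSup hbddn θ
      have hmono := hΦmono (Set.mem_Ici.mpr (mul_nonneg (Nat.cast_nonneg n) ht.le))
        (Set.mem_Ici.mpr (le_trans (mul_nonneg (Nat.cast_nonneg n) ht.le) hle)) hle
      exact hmono.trans har
    have htend : Tendsto (fun n : ℕ => Φ ((n : ℝ) * t)) atTop atTop :=
      hΦtop.comp (tendsto_natCast_atTop_atTop.atTop_mul_const ht)
    obtain ⟨n, hn⟩ := (htend.eventually_gt_atTop B).exists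
    exact absurd (hbound n) (not_le.mpr hn)
  exact ⟨key, fun θ x => Measure.AbsolutelyContinuous.mk fun s hs h0 => key s hs h0 θ x⟩
end

section
/- Let Θ be a nonempty index set and (κ_θ)_{θ∈Θ} a family of Markov kernels on ℝ^d with nonlinear Markov operator P̄f(x) = sup_{θ∈Θ} ∫ f dκ_θ(x,·); assume x ↦ P̄f(x) is Borel measurable for every bounded Borel measurable f ≥ 0. Let Φ : [0,∞) → [0,∞) be increasing with lim_{r→∞} Φ(r) = ∞, Ψ : ℝ^d × ℝ^d → [0,∞) Borel measurable, and assume the Harnack-type inequality Φ(P̄f(x)) ≤ P̄(Φ∘f)(y)·e^{Ψ(x,y)} for all bounded Borel measurable f ≥ 0 and all x, y ∈ ℝ^d. If μ is a quasi-invariant linear expectation of P̄, then every invariant linear expectation μ₀ of P̄ is absolutely continuous with respect to μ. -/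
/-!
Suppose `μ A = 0` but `μ₀ A > 0`. Invariance gives `∫ P̄ 1_A dμ₀ = μ₀ A > 0`, so
`c := P̄ 1_A (x₀) > 0` at some point `x₀`. Applying the Harnack inequality to `r • 1_A` at
`(x₀, y)` and integrating in `y` against `μ` gives
`Φ (r c) ∫ e^{-Ψ(x₀, ·)} dμ ≤ ∫ P̄ (Φ ∘ r 1_A) dμ`, and quasi-invariance bounds the right-hand
side by `sup g · Φ 0`, because `Φ ∘ r 1_A = Φ 0` off the `μ`-null set `A`.
Letting `r → ∞` contradicts `Φ → ∞`.
-/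

open MeasureTheory ProbabilityTheory Filter

section nlOp

variable {d : ℕ} {Θ : Type*} (κ : Θ → Kernel (EuclideanSpace ℝ (Fin d)) (EuclideanSpace ℝ (Fin d)))

lemma nlOp_nonneg {f : EuclideanSpace ℝ (Fin d) → ℝ} (hf : ∀ y, 0 ≤ f y)
    (x : EuclideanSpace ℝ (Fin d)) : 0 ≤ nlOp κ f x :=
  Real.iSup_nonneg fun _ => integral_nonneg hf

lemma nlOp_le [Nonempty Θ] [∀ θ, IsMarkovKernel (κ θ)] {f : EuclideanSpace ℝ (Fin d) → ℝ}
    {C : ℝ} (hf : ∀ y, 0 ≤ f y) (hfC : ∀ y, f y ≤ C) (x : EuclideanSpace ℝ (Fin d)) :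
    nlOp κ f x ≤ C :=
  ciSup_le fun θ => calc
    ∫ y, f y ∂(κ θ x) ≤ ∫ _, C ∂(κ θ x) :=
      integral_mono_of_nonneg (ae_of_all _ hf) (integrable_const C) (ae_of_all _ hfC)
    _ = C := by simp

lemma nlOp_const_mul {a : ℝ} (ha : 0 ≤ a) (f : EuclideanSpace ℝ (Fin d) → ℝ)
    (x : EuclideanSpace ℝ (Fin d)) : nlOp κ (fun z => a * f z) x = a * nlOp κ f x := by
  simp only [nlOp, Real.mul_iSup_of_nonneg ha, integral_const_mul]

lemma integrable_nlOp [Nonempty Θ] [∀ θ, IsMarkovKernel (κ θ)]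
    {μ : Measure (EuclideanSpace ℝ (Fin d))} [IsFiniteMeasure μ] {f : EuclideanSpace ℝ (Fin d) → ℝ}
    {C : ℝ} (hmeas : Measurable (nlOp κ f)) (hf : ∀ y, 0 ≤ f y) (hfC : ∀ y, f y ≤ C) :
    Integrable (nlOp κ f) μ :=
  Integrable.of_bound hmeas.aestronglyMeasurable C <| ae_of_all _ fun x => by
    rw [Real.norm_of_nonneg (nlOp_nonneg κ hf x)]
    exact nlOp_le κ hf hfC x

end nlOp

section MeasureLemmas

variable {α : Type*} [MeasurableSpace α] {μ : Measure α}

lemma integral_exp_neg_pos [IsFiniteMeasure μ] [NeZero μ] {ψ : α → ℝ} (hψ : Measurable ψ)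
    (hψ0 : ∀ y, 0 ≤ ψ y) : 0 < ∫ y, Real.exp (-ψ y) ∂μ :=
  integral_exp_pos <|
    Integrable.of_bound (Real.measurable_exp.comp hψ.neg).aestronglyMeasurable 1 <|
    ae_of_all _ fun y => by
      rw [Real.norm_of_nonneg (Real.exp_pos _).le, Real.exp_le_one_iff, neg_nonpos]
      exact hψ0 y

lemma mul_integral_exp_neg_le {a : ℝ} {G ψ : α → ℝ} (ha : 0 ≤ a) (hG : Integrable G μ)
    (h : ∀ y, a ≤ G y * Real.exp (ψ y)) : a * ∫ y, Real.exp (-ψ y) ∂μ ≤ ∫ y, G y ∂μ := by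
  rw [← integral_const_mul]
  refine integral_mono_of_nonneg (ae_of_all _ fun y => by positivity) hG (ae_of_all _ fun y => ?_)
  dsimp only
  rw [Real.exp_neg, ← div_eq_mul_inv, div_le_iff₀ (Real.exp_pos _)]
  exact h y

lemma integral_mul_le_of_ae_eq_const [IsProbabilityMeasure μ] {g F : α → ℝ} {C a : ℝ}
    (hg0 : ∀ x, 0 ≤ g x) (hgC : ∀ x, g x ≤ C) (hF0 : ∀ x, 0 ≤ F x) (hFa : F =ᵐ[μ] fun _ => a) :
    ∫ x, g x * F x ∂μ ≤ C * a := by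
  have ha : 0 ≤ a := by
    obtain ⟨x, hx⟩ := hFa.exists
    simpa [hx] using hF0 x
  calc ∫ x, g x * F x ∂μ ≤ ∫ _, C * a ∂μ :=
        integral_mono_of_nonneg (ae_of_all _ fun x => mul_nonneg (hg0 x) (hF0 x))
          (integrable_const _) (hFa.mono fun x hx => by
            simpa [hx] using mul_le_mul_of_nonneg_right (hgC x) ha)
    _ = C * a := by simp

end MeasureLemmas

section Harnack

variable {d : ℕ} {Θ : Type*} (κ : Θ → Kernel (EuclideanSpace ℝ (Fin d)) (EuclideanSpace ℝ (Fin d)))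

lemma exists_nlOp_indicator_pos {μ₀ : Measure (EuclideanSpace ℝ (Fin d))} [IsFiniteMeasure μ₀]
    (hinv : ∀ f : EuclideanSpace ℝ (Fin d) → ℝ, Measurable f → (∀ y, 0 ≤ f y) →
      (∃ C, ∀ y, f y ≤ C) → ∫ x, nlOp κ f x ∂μ₀ = ∫ x, f x ∂μ₀)
    {A : Set (EuclideanSpace ℝ (Fin d))} (hA : MeasurableSet A) (hA₀ : μ₀ A ≠ 0) :
    ∃ x₀, 0 < nlOp κ (A.indicator 1) x₀ := by
  have hint : ∫ x, nlOp κ (A.indicator 1) x ∂μ₀ = μ₀.real A := by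
    rw [hinv (A.indicator 1) (measurable_const.indicator hA)
      (Set.indicator_nonneg fun _ _ => zero_le_one)
      ⟨1, Set.indicator_le_self' fun _ _ => zero_le_one⟩, integral_indicator_one hA]
  have hpos : 0 < μ₀.real A := ENNReal.toReal_pos hA₀ (measure_ne_top μ₀ A)
  by_contra! hle
  exact (hint ▸ hpos).not_ge (integral_nonpos hle)

lemma harnack_mul_integral_le [Nonempty Θ] [∀ θ, IsMarkovKernel (κ θ)]
    (hPmeas : ∀ f : EuclideanSpace ℝ (Fin d) → ℝ, Measurable f → (∀ y, 0 ≤ f y) →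
      (∃ C, ∀ y, f y ≤ C) → Measurable (nlOp κ f))
    {Φ : ℝ → ℝ} (hΦmono : MonotoneOn Φ (Set.Ici 0)) (hΦnonneg : ∀ r ∈ Set.Ici (0:ℝ), 0 ≤ Φ r)
    {Ψ : EuclideanSpace ℝ (Fin d) → EuclideanSpace ℝ (Fin d) → ℝ}
    (hHarnack : ∀ f : EuclideanSpace ℝ (Fin d) → ℝ, Measurable f → (∀ y, 0 ≤ f y) →
      (∃ C, ∀ y, f y ≤ C) → ∀ x y,
      Φ (nlOp κ f x) ≤ nlOp κ (fun z => Φ (f z)) y * Real.exp (Ψ x y))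
    {μ : Measure (EuclideanSpace ℝ (Fin d))} [IsProbabilityMeasure μ]
    {g : EuclideanSpace ℝ (Fin d) → ℝ} {C : ℝ} (hg0 : ∀ x, 0 ≤ g x) (hgC : ∀ x, g x ≤ C)
    (hquasi : ∀ f : EuclideanSpace ℝ (Fin d) → ℝ, Measurable f → (∀ y, 0 ≤ f y) →
      (∃ C, ∀ y, f y ≤ C) → ∫ x, nlOp κ f x ∂μ ≤ ∫ x, g x * f x ∂μ)
    {A : Set (EuclideanSpace ℝ (Fin d))} (hA : MeasurableSet A) (hAμ : μ A = 0)
    (x₀ : EuclideanSpace ℝ (Fin d)) {r : ℝ} (hr : 0 ≤ r) :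
    Φ (r * nlOp κ (A.indicator 1) x₀) * ∫ y, Real.exp (-Ψ x₀ y) ∂μ ≤ C * Φ 0 := by
  classical
  set f : EuclideanSpace ℝ (Fin d) → ℝ := fun z => r * A.indicator 1 z
  have hf0 : ∀ z, 0 ≤ f z := fun z =>
    mul_nonneg hr (Set.indicator_nonneg (fun _ _ => zero_le_one) z)
  have hfr : ∀ z, f z ≤ r := fun z =>
    mul_le_of_le_one_right hr (Set.indicator_le_self' (fun _ _ => zero_le_one) z)
  set F := A.piecewise (fun _ => Φ r) (fun _ => Φ 0)
  have hΦf : (fun z => Φ (f z)) = F := by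
    ext z
    by_cases hz : z ∈ A <;> simp [f, F, hz]
  have hΦ0 : 0 ≤ Φ 0 := hΦnonneg 0 Set.self_mem_Ici
  have hF0 : ∀ z, 0 ≤ F z := fun z => by
    by_cases hz : z ∈ A <;> simp [F, hz, hΦ0, hΦnonneg r hr]
  have hFr : ∀ z, F z ≤ Φ r := fun z => by
    by_cases hz : z ∈ A <;> simp [F, hz, hΦmono Set.self_mem_Ici (Set.mem_Ici.2 hr) hr]
  have hFmeas : Measurable F := measurable_const.piecewise hA measurable_const
  calc Φ (r * nlOp κ (A.indicator 1) x₀) * ∫ y, Real.exp (-Ψ x₀ y) ∂μ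
      = Φ (nlOp κ f x₀) * ∫ y, Real.exp (-Ψ x₀ y) ∂μ := by rw [nlOp_const_mul κ hr]
    _ ≤ ∫ y, nlOp κ F y ∂μ :=
        mul_integral_exp_neg_le (hΦnonneg _ (nlOp_nonneg κ hf0 x₀))
          (integrable_nlOp κ (hPmeas F hFmeas hF0 ⟨_, hFr⟩) hF0 hFr) fun y =>
          hΦf ▸ hHarnack f ((measurable_const.indicator hA).const_mul r) hf0 ⟨r, hfr⟩ x₀ y
    _ ≤ ∫ x, g x * F x ∂μ := hquasi F hFmeas hF0 ⟨_, hFr⟩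
    _ ≤ C * Φ 0 := integral_mul_le_of_ae_eq_const hg0 hgC hF0 <|
        (measure_eq_zero_iff_ae_notMem.1 hAμ).mono fun z hz => Set.piecewise_eq_of_notMem _ _ _ hz

end Harnack

theorem stmt_2_general {d : ℕ} {Θ : Type*} [Nonempty Θ]
    (κ : Θ → Kernel (EuclideanSpace ℝ (Fin d)) (EuclideanSpace ℝ (Fin d)))
    (hκ : ∀ θ, IsMarkovKernel (κ θ))
    (hPmeas : ∀ f : EuclideanSpace ℝ (Fin d) → ℝ, Measurable f → (∀ y, 0 ≤ f y) →
      (∃ C, ∀ y, f y ≤ C) → Measurable (nlOp κ f))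
    (Φ : ℝ → ℝ)
    (hΦmono : MonotoneOn Φ (Set.Ici 0))
    (hΦnonneg : ∀ r ∈ Set.Ici (0:ℝ), 0 ≤ Φ r)
    (hΦtop : Tendsto Φ atTop atTop)
    (Ψ : EuclideanSpace ℝ (Fin d) → EuclideanSpace ℝ (Fin d) → ℝ)
    (hΨmeas : Measurable (Function.uncurry Ψ))
    (hΨnonneg : ∀ x y, 0 ≤ Ψ x y)
    (hHarnack : ∀ f : EuclideanSpace ℝ (Fin d) → ℝ, Measurable f → (∀ y, 0 ≤ f y) →
      (∃ C, ∀ y, f y ≤ C) → ∀ x y,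
      Φ (nlOp κ f x) ≤ nlOp κ (fun z => Φ (f z)) y * Real.exp (Ψ x y))
    -- μ is a quasi-invariant linear expectation of P̄, with witness g
    (μ : Measure (EuclideanSpace ℝ (Fin d))) [IsProbabilityMeasure μ]
    (g : EuclideanSpace ℝ (Fin d) → ℝ)
    (hg0 : ∀ x, 0 ≤ g x) (hgbd : ∃ C, ∀ x, g x ≤ C)
    (hquasi : ∀ f : EuclideanSpace ℝ (Fin d) → ℝ, Measurable f → (∀ y, 0 ≤ f y) →
      (∃ C, ∀ y, f y ≤ C) → ∫ x, nlOp κ f x ∂μ ≤ ∫ x, g x * f x ∂μ)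
    -- μ₀ is an invariant linear expectation of P̄
    (μ₀ : Measure (EuclideanSpace ℝ (Fin d))) [IsProbabilityMeasure μ₀]
    (hinv : ∀ f : EuclideanSpace ℝ (Fin d) → ℝ, Measurable f → (∀ y, 0 ≤ f y) →
      (∃ C, ∀ y, f y ≤ C) → ∫ x, nlOp κ f x ∂μ₀ = ∫ x, f x ∂μ₀) :
    μ₀ ≪ μ := by
  have := hκ
  obtain ⟨C, hgC⟩ := hgbd
  refine Measure.AbsolutelyContinuous.mk fun A hA hAμ => ?_
  by_contra hA₀
  obtain ⟨x₀, hc⟩ := exists_nlOp_indicator_pos κ hinv hA hA₀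
  have hI : 0 < ∫ y, Real.exp (-Ψ x₀ y) ∂μ :=
    integral_exp_neg_pos (hΨmeas.comp measurable_prodMk_left) (hΨnonneg x₀)
  have htend : Tendsto (fun r => Φ (r * nlOp κ (A.indicator 1) x₀) * ∫ y, Real.exp (-Ψ x₀ y) ∂μ)
      atTop atTop :=
    (hΦtop.comp (tendsto_id.atTop_mul_const hc)).atTop_mul_const hI
  obtain ⟨r, hr_big, hr⟩ :=
    ((htend.eventually_gt_atTop (C * Φ 0)).and (eventually_ge_atTop 0)).exists
  exact hr_big.not_ge <| harnack_mul_integral_le κ hPmeas hΦmono hΦnonneg hHarnack hg0 hgC hquasi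
    hA hAμ x₀ hr

theorem stmt_2 {d : ℕ} {Θ : Type*} [Nonempty Θ]
    (κ : Θ → Kernel (EuclideanSpace ℝ (Fin d)) (EuclideanSpace ℝ (Fin d)))
    (hκ : ∀ θ, IsMarkovKernel (κ θ))
    (hPmeas : ∀ f : EuclideanSpace ℝ (Fin d) → ℝ, Measurable f → (∀ y, 0 ≤ f y) →
      (∃ C, ∀ y, f y ≤ C) → Measurable (nlOp κ f))
    (Φ : ℝ → ℝ)
    (hΦmono : MonotoneOn Φ (Set.Ici 0))
    (hΦnonneg : ∀ r ∈ Set.Ici (0:ℝ), 0 ≤ Φ r)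
    (hΦtop : Tendsto Φ atTop atTop)
    (Ψ : EuclideanSpace ℝ (Fin d) → EuclideanSpace ℝ (Fin d) → ℝ)
    (hΨmeas : Measurable (Function.uncurry Ψ))
    (hΨnonneg : ∀ x y, 0 ≤ Ψ x y)
    (hHarnack : ∀ f : EuclideanSpace ℝ (Fin d) → ℝ, Measurable f → (∀ y, 0 ≤ f y) →
      (∃ C, ∀ y, f y ≤ C) → ∀ x y,
      Φ (nlOp κ f x) ≤ nlOp κ (fun z => Φ (f z)) y * Real.exp (Ψ x y))
    -- μ is a quasi-invariant linear expectation of P̄, with witness g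
    (μ : Measure (EuclideanSpace ℝ (Fin d))) [IsProbabilityMeasure μ]
    (g : EuclideanSpace ℝ (Fin d) → ℝ) (hgmeas : Measurable g)
    (hg0 : ∀ x, 0 ≤ g x) (hgbd : ∃ C, ∀ x, g x ≤ C)
    (hquasi : ∀ f : EuclideanSpace ℝ (Fin d) → ℝ, Measurable f → (∀ y, 0 ≤ f y) →
      (∃ C, ∀ y, f y ≤ C) → ∫ x, nlOp κ f x ∂μ ≤ ∫ x, g x * f x ∂μ)
    -- μ₀ is an invariant linear expectation of P̄
    (μ₀ : Measure (EuclideanSpace ℝ (Fin d))) [IsProbabilityMeasure μ₀]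
    (hinv : ∀ f : EuclideanSpace ℝ (Fin d) → ℝ, Measurable f → (∀ y, 0 ≤ f y) →
      (∃ C, ∀ y, f y ≤ C) → ∫ x, nlOp κ f x ∂μ₀ = ∫ x, f x ∂μ₀) :
    μ₀ ≪ μ :=
  stmt_2_general κ hκ hPmeas Φ hΦmono hΦnonneg hΦtop Ψ hΨmeas hΨnonneg hHarnack μ g hg0 hgbd hquasi
    μ₀ hinv
end

section
/- Let Θ be a nonempty index set and (κ_θ)_{θ∈Θ} a family of Markov kernels on ℝ^d with nonlinear Markov operator P̄f(x) = sup_{θ∈Θ} ∫ f dκ_θ(x,·); assume x ↦ P̄f(x) is Borel measurable for every bounded Borel measurable f ≥ 0. Let Φ : [0,∞) → [0,∞) be increasing, Ψ : ℝ^d × ℝ^d → [0,∞) Borel measurable, and assume the Harnack-type inequality Φ(P̄f(x)) ≤ P̄(Φ∘f)(y)·e^{Ψ(x,y)} for all bounded Borel measurable f ≥ 0 and all x, y ∈ ℝ^d. If μ is an invariant linear expectation of P̄, then for every x ∈ ℝ^d and every bounded Borel measurable f ≥ 0 with ∫ Φ∘f dμ ≤ 1 one has Φ(P̄f(x)) ≤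 1 / ∫_{ℝ^d} e^{−Ψ(x,y)} μ(dy). -/
open MeasureTheory ProbabilityTheory Filter

theorem stmt_6 {d : ℕ} {Θ : Type*} [Nonempty Θ]
    (κ : Θ → Kernel (EuclideanSpace ℝ (Fin d)) (EuclideanSpace ℝ (Fin d)))
    (hκ : ∀ θ, IsMarkovKernel (κ θ))
    (hPmeas : ∀ f : EuclideanSpace ℝ (Fin d) → ℝ, Measurable f → (∀ y, 0 ≤ f y) →
      (∃ C, ∀ y, f y ≤ C) → Measurable (nlOp κ f))
    (Φ : ℝ → ℝ)
    (hΦmono : MonotoneOn Φ (Set.Ici 0))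
    (hΦnonneg : ∀ r ∈ Set.Ici (0:ℝ), 0 ≤ Φ r)
    (Ψ : EuclideanSpace ℝ (Fin d) → EuclideanSpace ℝ (Fin d) → ℝ)
    (hΨmeas : Measurable (Function.uncurry Ψ))
    (hΨnonneg : ∀ x y, 0 ≤ Ψ x y)
    (hHarnack : ∀ f : EuclideanSpace ℝ (Fin d) → ℝ, Measurable f → (∀ y, 0 ≤ f y) →
      (∃ C, ∀ y, f y ≤ C) → ∀ x y,
      Φ (nlOp κ f x) ≤ nlOp κ (fun z => Φ (f z)) y * Real.exp (Ψ x y))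
    -- μ is an invariant linear expectation of P̄
    (μ : Measure (EuclideanSpace ℝ (Fin d))) [IsProbabilityMeasure μ]
    (hinv : ∀ f : EuclideanSpace ℝ (Fin d) → ℝ, Measurable f → (∀ y, 0 ≤ f y) →
      (∃ C, ∀ y, f y ≤ C) → ∫ x, nlOp κ f x ∂μ = ∫ x, f x ∂μ) :
    ∀ (x : EuclideanSpace ℝ (Fin d)) (f : EuclideanSpace ℝ (Fin d) → ℝ),
      Measurable f → (∀ y, 0 ≤ f y) → (∃ C, ∀ y, f y ≤ C) →
      (∫ y, Φ (f y) ∂μ) ≤ 1 →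
      Φ (nlOp κ f x) ≤ 1 / ∫ y, Real.exp (-(Ψ x y)) ∂μ := by
  intro x f hf hf0 ⟨C, hfC⟩ hΦf1
  set g : EuclideanSpace ℝ (Fin d) → ℝ := fun z => Φ (f z) with hg
  have hΦ' : Monotone (fun r => Φ (max r 0)) := by
    intro r s hrs
    exact hΦmono (le_max_right r 0) (le_max_right s 0) (max_le_max hrs le_rfl)
  have hgmeas : Measurable g := by
    have : g = (fun r => Φ (max r 0)) ∘ f := by
      funext z; simp [hg, max_eq_left (hf0 z)]
    rw [this]
    exact hΦ'.measurable.comp hf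
  have hg0 : ∀ y, 0 ≤ g y := fun y => hΦnonneg _ (hf0 y)
  set B : ℝ := Φ (max C 0) with hB
  have hgB : ∀ y, g y ≤ B := fun y =>
    hΦmono (hf0 y) (le_max_right C 0) ((hfC y).trans (le_max_left C 0))
  have hB0 : 0 ≤ B := hΦnonneg _ (le_max_right C 0)
  have hnlB : ∀ y, nlOp κ g y ≤ B := by
    intro y
    refine ciSup_le fun θ => ?_
    have hgi : Integrable g (κ θ y) := by
      have := hκ θ
      refine (integrable_const B).mono' hgmeas.aestronglyMeasurable ?_
      filter_upwards with z
      rw [Real.norm_eq_abs, abs_of_nonneg (hg0 z)]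
      exact hgB z
    calc ∫ z, g z ∂(κ θ y) ≤ ∫ _, B ∂(κ θ y) :=
          integral_mono hgi (integrable_const B) hgB
      _ = B := by
          have := hκ θ
          simp
  have hnl0 : ∀ y, 0 ≤ nlOp κ g y := by
    intro y
    exact Real.iSup_nonneg fun θ => integral_nonneg hg0
  set c : ℝ := Φ (nlOp κ f x) with hc
  have hΨx : Measurable fun y => Ψ x y := by
    exact hΨmeas.comp (measurable_const.prodMk measurable_id)
  have h1 : ∀ y, c * Real.exp (-(Ψ x y)) ≤ nlOp κ g y := by
    intro y
    have h := hHarnack f hf hf0 ⟨C, hfC⟩ x y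
    have hexp : (0:ℝ) < Real.exp (-(Ψ x y)) := Real.exp_pos _
    calc c * Real.exp (-(Ψ x y))
        ≤ (nlOp κ g y * Real.exp (Ψ x y)) * Real.exp (-(Ψ x y)) := by
          exact mul_le_mul_of_nonneg_right h hexp.le
      _ = nlOp κ g y := by
          rw [mul_assoc, ← Real.exp_add]; simp
  have hexpint : Integrable (fun y => Real.exp (-(Ψ x y))) μ := by
    refine (integrable_const (1:ℝ)).mono'
      ((Real.measurable_exp.comp hΨx.neg).aestronglyMeasurable) ?_
    filter_upwards with y
    rw [Real.norm_eq_abs, abs_of_pos (Real.exp_pos _)]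
    exact Real.exp_le_one_iff.2 (neg_nonpos.2 (hΨnonneg x y))
  have hint1 : Integrable (fun y => c * Real.exp (-(Ψ x y))) μ :=
    hexpint.const_mul c
  have hint2 : Integrable (nlOp κ g) μ := by
    refine (integrable_const B).mono'
      (hPmeas g hgmeas hg0 ⟨B, hgB⟩).aestronglyMeasurable ?_
    filter_upwards with y
    rw [Real.norm_eq_abs, abs_of_nonneg (hnl0 y)]
    exact hnlB y
  have hmain : c * ∫ y, Real.exp (-(Ψ x y)) ∂μ ≤ 1 := by
    calc c * ∫ y, Real.exp (-(Ψ x y)) ∂μ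
        = ∫ y, c * Real.exp (-(Ψ x y)) ∂μ := (integral_const_mul c _).symm
      _ ≤ ∫ y, nlOp κ g y ∂μ := integral_mono hint1 hint2 h1
      _ = ∫ y, g y ∂μ := hinv g hgmeas hg0 ⟨B, hgB⟩
      _ ≤ 1 := hΦf1
  have hIpos : 0 < ∫ y, Real.exp (-(Ψ x y)) ∂μ := by
    rw [integral_pos_iff_support_of_nonneg (fun y => (Real.exp_pos _).le) hexpint]
    have : Function.support (fun y => Real.exp (-(Ψ x y))) = Set.univ := by
      ext y; simp [Function.support, (Real.exp_pos _).ne']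
    rw [this]
    simp
  rw [le_div_iff₀ hIpos]
  exact hmain
end

section
/- Fix θ > 0 and let P_θ f(x) = ∫_ℝ f(z) dN(e^{−θ}x, 1−e^{−2θ})(z). Then for every α > 1 the Harnack inequality (P_θ f(x))^α ≤ P_θ f^α(y) · exp( α e^{−2θ}(x−y)² / (2(α−1)(1−e^{−2θ})) ) holds for all x, y ∈ ℝ and all bounded Borel measurable f : ℝ → [0,∞). -/
/-!
Write the integrand against `N(m₁, v)` as `f p₁ = (f p₂^{1/α}) · (p₁ p₂^{-1/α})`, where `pᵢ` are
the Gaussian densities, and apply Hölder's inequality with exponents `α` and `q = α / (α - 1)`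
with respect to Lebesgue measure. The first factor gives `∫ f^α dN(m₂, v)`; the second gives
`∫ p₁^q p₂^{1-q}`, which after completing the square is `exp (q (q - 1) (m₁ - m₂)² / (2v))`.
For the Ornstein–Uhlenbeck kernel, `mᵢ = e^{-θ} xᵢ` and `v = 1 - e^{-2θ}`.
-/
open MeasureTheory ProbabilityTheory Real
open scoped NNReal ENNReal

theorem lintegral_withDensity_rpow_le_mul {X : Type*} [MeasurableSpace X] (ν : Measure X)
    {p₁ p₂ f : X → ℝ≥0∞} (hp₁ : Measurable p₁) (hp₂ : Measurable p₂)
    (hp₂_ne_zero : ∀ x, p₂ x ≠ 0) (hp₂_ne_top : ∀ x, p₂ x ≠ ∞) (hf : Measurable f)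
    {α : ℝ} (hα : 1 < α) :
    (∫⁻ x, f x ∂ν.withDensity p₁) ^ α ≤
      (∫⁻ x, f x ^ α ∂ν.withDensity p₂) *
        (∫⁻ x, p₁ x ^ α.conjExponent * p₂ x ^ (1 - α.conjExponent) ∂ν) ^ (α - 1) := by
  set q := α.conjExponent with hq
  have hα₀ : 0 < α := by linarith
  have hpq : α.HolderConjugate q := Real.HolderConjugate.conjExponent hα
  have hq₀ : 0 < q := hpq.symm.pos
  have hα₁ : α - 1 ≠ 0 := by linarith
  rw [lintegral_withDensity_eq_lintegral_mul _ hp₁ hf,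
    lintegral_withDensity_eq_lintegral_mul _ hp₂ (by fun_prop)]
  have holder := ENNReal.lintegral_mul_le_Lp_mul_Lq ν hpq
    (f := fun x ↦ f x * p₂ x ^ α⁻¹) (g := fun x ↦ p₁ x * p₂ x ^ (-α⁻¹))
    (by fun_prop) (by fun_prop)
  have h_prod : ∀ x, f x * p₂ x ^ α⁻¹ * (p₁ x * p₂ x ^ (-α⁻¹)) = p₁ x * f x := fun x ↦ by
    rw [mul_mul_mul_comm, ← ENNReal.rpow_add _ _ (hp₂_ne_zero x) (hp₂_ne_top x), add_neg_cancel,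
      ENNReal.rpow_zero, mul_one, mul_comm]
  have h_fst : ∀ x, (f x * p₂ x ^ α⁻¹) ^ α = p₂ x * f x ^ α := fun x ↦ by
    rw [ENNReal.mul_rpow_of_nonneg _ _ hα₀.le, ← ENNReal.rpow_mul, inv_mul_cancel₀ hα₀.ne',
      ENNReal.rpow_one, mul_comm]
  have h_snd : ∀ x, (p₁ x * p₂ x ^ (-α⁻¹)) ^ q = p₁ x ^ q * p₂ x ^ (1 - q) := fun x ↦ by
    rw [ENNReal.mul_rpow_of_nonneg _ _ hq₀.le, ← ENNReal.rpow_mul, hq, Real.conjExponent]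
    congr 2
    field_simp
    ring
  simp only [Pi.mul_apply, h_prod, h_fst, h_snd] at holder
  calc _ ≤ ((∫⁻ x, p₂ x * f x ^ α ∂ν) ^ (1 / α) *
          (∫⁻ x, p₁ x ^ q * p₂ x ^ (1 - q) ∂ν) ^ (1 / q)) ^ α :=
        ENNReal.rpow_le_rpow holder hα₀.le
    _ = _ := by
      rw [ENNReal.mul_rpow_of_nonneg _ _ hα₀.le, ← ENNReal.rpow_mul, ← ENNReal.rpow_mul,
        one_div_mul_cancel hα₀.ne', ENNReal.rpow_one, hq, Real.conjExponent]
      congr 2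
      field_simp

theorem gaussianPDFReal_rpow_mul_rpow (m₁ m₂ : ℝ) {v : ℝ≥0} (hv : v ≠ 0) (q z : ℝ) :
    gaussianPDFReal m₁ v z ^ q * gaussianPDFReal m₂ v z ^ (1 - q) =
      exp (q * (q - 1) * (m₁ - m₂) ^ 2 / (2 * v)) *
        gaussianPDFReal (q * m₁ + (1 - q) * m₂) v z := by
  have hv₀ : (0 : ℝ) < v := by positivity
  have hc : (0 : ℝ) < (√(2 * π * v))⁻¹ := by positivity
  simp only [gaussianPDFReal]
  rw [mul_rpow hc.le (exp_pos _).le, mul_rpow hc.le (exp_pos _).le, ← exp_mul, ← exp_mul,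
    mul_mul_mul_comm, ← rpow_add hc, add_sub_cancel, rpow_one, ← exp_add,
    mul_left_comm, ← exp_add]
  congr 2
  field_simp
  ring

theorem lintegral_gaussianPDF_rpow_mul_rpow (m₁ m₂ : ℝ) {v : ℝ≥0} (hv : v ≠ 0) (q : ℝ) :
    ∫⁻ z, gaussianPDF m₁ v z ^ q * gaussianPDF m₂ v z ^ (1 - q) =
      ENNReal.ofReal (exp (q * (q - 1) * (m₁ - m₂) ^ 2 / (2 * v))) := by
  simp_rw [gaussianPDF, ENNReal.ofReal_rpow_of_pos (gaussianPDFReal_pos _ _ _ hv),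
    ← ENNReal.ofReal_mul (rpow_nonneg (gaussianPDFReal_nonneg _ _ _) _),
    gaussianPDFReal_rpow_mul_rpow m₁ m₂ hv, ENNReal.ofReal_mul (exp_nonneg _)]
  rw [lintegral_const_mul _ (measurable_gaussianPDFReal _ _).ennreal_ofReal,
    lintegral_gaussianPDFReal_eq_one _ hv, mul_one]

theorem lintegral_gaussianReal_rpow_le_mul (m₁ m₂ : ℝ) {v : ℝ≥0} (hv : v ≠ 0)
    {f : ℝ → ℝ≥0∞} (hf : Measurable f) {α : ℝ} (hα : 1 < α) :
    (∫⁻ z, f z ∂gaussianReal m₁ v) ^ α ≤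
      (∫⁻ z, f z ^ α ∂gaussianReal m₂ v) *
        ENNReal.ofReal (exp (α * (m₁ - m₂) ^ 2 / (2 * (α - 1) * v))) := by
  have hα₁ : α - 1 ≠ 0 := by linarith
  rw [gaussianReal_of_var_ne_zero _ hv, gaussianReal_of_var_ne_zero _ hv]
  refine (lintegral_withDensity_rpow_le_mul _ (measurable_gaussianPDF _ _)
    (measurable_gaussianPDF m₂ v) (fun _ ↦ (gaussianPDF_pos _ hv _).ne')
    (fun _ ↦ ENNReal.ofReal_ne_top) hf hα).trans_eq ?_
  rw [lintegral_gaussianPDF_rpow_mul_rpow _ _ hv, ENNReal.ofReal_rpow_of_pos (exp_pos _),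
    ← exp_mul, Real.conjExponent]
  congr 3
  field_simp
  ring

theorem integral_gaussianReal_rpow_le_mul (m₁ m₂ : ℝ) {v : ℝ≥0} (hv : v ≠ 0)
    {f : ℝ → ℝ} (hf : Measurable f) (hf₀ : 0 ≤ f) {α : ℝ} (hα : 1 < α)
    (hfα : Integrable (fun z ↦ f z ^ α) (gaussianReal m₂ v)) :
    (∫ z, f z ∂gaussianReal m₁ v) ^ α ≤
      (∫ z, f z ^ α ∂gaussianReal m₂ v) * exp (α * (m₁ - m₂) ^ 2 / (2 * (α - 1) * v)) := by
  have key := lintegral_gaussianReal_rpow_le_mul m₁ m₂ hv hf.ennreal_ofReal hα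
  simp_rw [ENNReal.ofReal_rpow_of_nonneg (hf₀ _) (by linarith : (0 : ℝ) ≤ α)] at key
  rw [integral_eq_lintegral_of_nonneg_ae (ae_of_all _ hf₀) hf.aestronglyMeasurable,
    integral_eq_lintegral_of_nonneg_ae (ae_of_all _ fun z ↦ rpow_nonneg (hf₀ z) α)
      hfα.aestronglyMeasurable, ENNReal.toReal_rpow,
    ← ENNReal.toReal_ofReal (exp_nonneg _), ← ENNReal.toReal_mul]
  exact ENNReal.toReal_mono (ENNReal.mul_ne_top hfα.lintegral_lt_top.ne ENNReal.ofReal_ne_top) key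

theorem stmt_10 (θ : ℝ) (hθ : 0 < θ) (α : ℝ) (hα : 1 < α)
    (f : ℝ → ℝ) (hf : Measurable f) (hf0 : ∀ z, 0 ≤ f z) (hfbd : ∃ M, ∀ z, f z ≤ M)
    (x y : ℝ) :
    (∫ z, f z ∂(gaussianReal (Real.exp (-θ) * x) (Real.toNNReal (1 - Real.exp (-2*θ))))) ^ α ≤
      (∫ z, f z ^ α ∂(gaussianReal (Real.exp (-θ) * y) (Real.toNNReal (1 - Real.exp (-2*θ))))) *
        Real.exp (α * Real.exp (-2*θ) * (x - y)^2 / (2*(α-1)*(1 - Real.exp (-2*θ)))) := by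
  obtain ⟨M, hM⟩ := hfbd
  have hv : 0 < 1 - exp (-2 * θ) := sub_pos.2 (exp_lt_one_iff.2 (by linarith))
  have hfα : Integrable (fun z ↦ f z ^ α)
      (gaussianReal (exp (-θ) * y) (1 - exp (-2 * θ)).toNNReal) :=
    Integrable.of_bound (by fun_prop : Measurable fun z ↦ f z ^ α).aestronglyMeasurable (M ^ α)
      (ae_of_all _ fun z ↦ by
        rw [norm_of_nonneg (rpow_nonneg (hf0 z) α)]
        exact rpow_le_rpow (hf0 z) (hM z) (by linarith))
  refine (integral_gaussianReal_rpow_le_mul _ _ (toNNReal_pos.2 hv).ne' hf hf0 hα hfα).trans_eq ?_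
  have h_exp : exp (-2 * θ) = exp (-θ) ^ 2 := by rw [sq, ← exp_add]; ring_nf
  rw [coe_toNNReal _ hv.le, h_exp]
  ring_nf
end

section
/- Fix θ > 0 and let P_θ f(x) = ∫_ℝ f(z) dN(e^{−θ}x, 1−e^{−2θ})(z). Then for every α > 1 the shift Harnack inequality (P_θ f(x))^α ≤ P_θ( f^α(v+·) )(x) · exp( α v² / (2(α−1)(1−e^{−2θ})) ) holds for all x, v ∈ ℝ and all bounded Borel measurable f : ℝ → [0,∞), where f^α(v+·) denotes the function z ↦ f(v+z)^α. -/
/-!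
The Gaussian `N(m, σ)` has a density `ρ` with respect to its translate `N(m + v, σ)`. Hölder's
inequality with exponents `α` and `β = α / (α - 1)` against this density gives
`(∫ f dN(m, σ))^α ≤ ∫ f^α dN(m + v, σ) · (∫ ρ^β dN(m + v, σ))^(α - 1)`, and completing the
square shows `∫ ρ^β dN(m + v, σ) = exp (β (β - 1) v² / (2σ))`. Since
`(α - 1) β (β - 1) = α / (α - 1)`, this is the claimed bound once `N(m + v, σ)` is written as the
law of `v + Z` with `Z ~ N(m, σ)`.
-/

open MeasureTheory ProbabilityTheory Real
open scoped ENNReal NNReal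

lemma lintegral_withDensity_le_Lp_mul_Lq {X : Type*} [MeasurableSpace X] (μ : Measure X)
    {p q : ℝ} (hpq : p.HolderConjugate q) {ρ g : X → ℝ≥0∞} (hρ : AEMeasurable ρ μ)
    (hg : AEMeasurable g μ) :
    ∫⁻ x, g x ∂μ.withDensity ρ
      ≤ (∫⁻ x, g x ^ p ∂μ) ^ (1 / p) * (∫⁻ x, ρ x ^ q ∂μ) ^ (1 / q) := by
  rw [lintegral_withDensity_eq_lintegral_mul₀ hρ hg, mul_comm ρ]
  exact ENNReal.lintegral_mul_le_Lp_mul_Lq μ hpq hg hρ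

namespace ProbabilityTheory

variable (m v : ℝ) (σ : ℝ≥0)

/-- The likelihood ratio `gaussianPDFReal m σ / gaussianPDFReal (m + v) σ`. -/
noncomputable def gaussianShiftRatio (z : ℝ) : ℝ :=
  exp (((z - m - v) ^ 2 - (z - m) ^ 2) / (2 * σ))

lemma gaussianPDFReal_eq_gaussianShiftRatio_mul (z : ℝ) :
    gaussianPDFReal m σ z = gaussianShiftRatio m v σ z * gaussianPDFReal (m + v) σ z := by
  rw [gaussianShiftRatio, gaussianPDFReal, gaussianPDFReal, mul_left_comm, ← exp_add]
  ring_nf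

lemma gaussianShiftRatio_rpow_mul_gaussianPDFReal (q z : ℝ) :
    gaussianShiftRatio m v σ z ^ q * gaussianPDFReal (m + v) σ z
      = exp (q * (q - 1) * v ^ 2 / (2 * σ)) * gaussianPDFReal (m + (1 - q) * v) σ z := by
  rw [gaussianShiftRatio, ← exp_mul, gaussianPDFReal, gaussianPDFReal, mul_left_comm,
    ← exp_add, mul_left_comm, ← exp_add]
  ring_nf

lemma gaussianShiftRatio_pos (z : ℝ) : 0 < gaussianShiftRatio m v σ z := exp_pos _

@[fun_prop]
lemma measurable_gaussianShiftRatio : Measurable (gaussianShiftRatio m v σ) := by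
  unfold gaussianShiftRatio
  fun_prop

variable {σ}

lemma gaussianReal_eq_withDensity_gaussianShiftRatio (hσ : σ ≠ 0) :
    gaussianReal m σ = (gaussianReal (m + v) σ).withDensity
      fun z ↦ ENNReal.ofReal (gaussianShiftRatio m v σ z) := by
  rw [gaussianReal_of_var_ne_zero _ hσ, gaussianReal_of_var_ne_zero _ hσ,
    ← withDensity_mul _ (measurable_gaussianPDF _ _) (by fun_prop)]
  congr 1
  funext z
  rw [Pi.mul_apply, gaussianPDF, gaussianPDF,
    ← ENNReal.ofReal_mul (gaussianPDFReal_nonneg _ _ _), mul_comm,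
    gaussianPDFReal_eq_gaussianShiftRatio_mul m v]

lemma lintegral_gaussianShiftRatio_rpow (hσ : σ ≠ 0) (q : ℝ) :
    ∫⁻ z, ENNReal.ofReal (gaussianShiftRatio m v σ z) ^ q ∂gaussianReal (m + v) σ
      = ENNReal.ofReal (exp (q * (q - 1) * v ^ 2 / (2 * σ))) := by
  have hpointwise : ∀ z,
      gaussianPDF (m + v) σ z * ENNReal.ofReal (gaussianShiftRatio m v σ z) ^ q
        = ENNReal.ofReal (exp (q * (q - 1) * v ^ 2 / (2 * σ)))
          * gaussianPDF (m + (1 - q) * v) σ z := by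
    intro z
    rw [gaussianPDF, gaussianPDF,
      ENNReal.ofReal_rpow_of_pos (gaussianShiftRatio_pos m v σ z),
      ← ENNReal.ofReal_mul (gaussianPDFReal_nonneg _ _ _), mul_comm,
      gaussianShiftRatio_rpow_mul_gaussianPDFReal, ENNReal.ofReal_mul (exp_nonneg _)]
  rw [gaussianReal_of_var_ne_zero _ hσ, lintegral_withDensity_eq_lintegral_mul _
      (measurable_gaussianPDF _ _) (by fun_prop)]
  simp_rw [Pi.mul_apply, hpointwise]
  rw [lintegral_const_mul _ (measurable_gaussianPDF _ _), lintegral_gaussianPDF_eq_one _ hσ,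
    mul_one]

theorem lintegral_gaussianReal_rpow_le_shift (hσ : σ ≠ 0) {α : ℝ} (hα : 1 < α) {g : ℝ → ℝ≥0∞}
    (hg : Measurable g) :
    (∫⁻ z, g z ∂gaussianReal m σ) ^ α
      ≤ (∫⁻ z, g (v + z) ^ α ∂gaussianReal m σ)
        * ENNReal.ofReal (exp (α * v ^ 2 / (2 * (α - 1) * σ))) := by
  have hα0 : 0 < α := zero_lt_one.trans hα
  set β := α.conjExponent
  have hshift :
      ∫⁻ z, g (v + z) ^ α ∂gaussianReal m σ = ∫⁻ z, g z ^ α ∂gaussianReal (m + v) σ := by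
    rw [← gaussianReal_map_const_add, lintegral_map (by fun_prop) (by fun_prop)]
  have hholder := lintegral_withDensity_le_Lp_mul_Lq (gaussianReal (m + v) σ)
    (Real.HolderConjugate.conjExponent hα)
    (measurable_gaussianShiftRatio m v σ).ennreal_ofReal.aemeasurable hg.aemeasurable
  rw [← gaussianReal_eq_withDensity_gaussianShiftRatio m v hσ,
    lintegral_gaussianShiftRatio_rpow m v hσ] at hholder
  calc (∫⁻ z, g z ∂gaussianReal m σ) ^ α
      ≤ ((∫⁻ z, g z ^ α ∂gaussianReal (m + v) σ) ^ (1 / α)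
          * ENNReal.ofReal (exp (β * (β - 1) * v ^ 2 / (2 * σ))) ^ (1 / β)) ^ α :=
        ENNReal.rpow_le_rpow hholder hα0.le
    _ = (∫⁻ z, g (v + z) ^ α ∂gaussianReal m σ)
          * ENNReal.ofReal (exp (α * v ^ 2 / (2 * (α - 1) * σ))) := by
        rw [hshift, ENNReal.mul_rpow_of_nonneg _ _ hα0.le, ← ENNReal.rpow_mul,
          ← ENNReal.rpow_mul, one_div_mul_cancel hα0.ne', ENNReal.rpow_one,
          ENNReal.ofReal_rpow_of_pos (exp_pos _), ← exp_mul]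
        congr 3
        have : α - 1 ≠ 0 := sub_ne_zero.2 hα.ne'
        simp only [β, Real.conjExponent]
        field_simp
        ring

theorem integral_gaussianReal_rpow_le_shift (hσ : σ ≠ 0) {α : ℝ} (hα : 1 < α) {f : ℝ → ℝ}
    (hf : Measurable f) (hf0 : ∀ z, 0 ≤ f z) (hfbd : ∃ M, ∀ z, f z ≤ M) :
    (∫ z, f z ∂gaussianReal m σ) ^ α
      ≤ (∫ z, f (v + z) ^ α ∂gaussianReal m σ) * exp (α * v ^ 2 / (2 * (α - 1) * σ)) := by
  obtain ⟨M, hM⟩ := hfbd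
  have hα0 : 0 < α := zero_lt_one.trans hα
  have hfα0 : ∀ z, 0 ≤ f (v + z) ^ α := fun z ↦ rpow_nonneg (hf0 _) _
  have hfα_lintegral : ∫⁻ z, ENNReal.ofReal (f (v + z)) ^ α ∂gaussianReal m σ
      = ∫⁻ z, ENNReal.ofReal (f (v + z) ^ α) ∂gaussianReal m σ :=
    lintegral_congr fun z ↦ ENNReal.ofReal_rpow_of_nonneg (hf0 _) hα0.le
  have hfα_finite : ∫⁻ z, ENNReal.ofReal (f (v + z) ^ α) ∂gaussianReal m σ ≠ ⊤ := by
    refine (lt_of_le_of_lt (b := ∫⁻ _, ENNReal.ofReal (M ^ α) ∂gaussianReal m σ) ?_ ?_).ne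
    · exact lintegral_mono fun z ↦
        ENNReal.ofReal_le_ofReal (rpow_le_rpow (hf0 _) (hM _) hα0.le)
    · simp
  have h := lintegral_gaussianReal_rpow_le_shift m v hσ hα hf.ennreal_ofReal
  rw [hfα_lintegral] at h
  rw [integral_eq_lintegral_of_nonneg_ae (ae_of_all _ hf0) hf.aestronglyMeasurable,
    integral_eq_lintegral_of_nonneg_ae (ae_of_all _ hfα0)
      ((hf.comp (measurable_const_add v)).pow_const α).aestronglyMeasurable,
    ENNReal.toReal_rpow, ← ENNReal.toReal_ofReal (exp_nonneg _), ← ENNReal.toReal_mul]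
  exact ENNReal.toReal_mono (ENNReal.mul_ne_top hfα_finite ENNReal.ofReal_ne_top) h

end ProbabilityTheory

theorem stmt_11 (θ : ℝ) (hθ : 0 < θ) (α : ℝ) (hα : 1 < α)
    (f : ℝ → ℝ) (hf : Measurable f) (hf0 : ∀ z, 0 ≤ f z) (hfbd : ∃ M, ∀ z, f z ≤ M)
    (x v : ℝ) :
    (∫ z, f z ∂(gaussianReal (Real.exp (-θ) * x) (Real.toNNReal (1 - Real.exp (-2*θ))))) ^ α ≤
      (∫ z, f (v + z) ^ α
          ∂(gaussianReal (Real.exp (-θ) * x) (Real.toNNReal (1 - Real.exp (-2*θ))))) *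
        Real.exp (α * v^2 / (2*(α-1)*(1 - Real.exp (-2*θ)))) := by
  have hvar : 0 < 1 - exp (-2 * θ) := sub_pos.2 (exp_lt_one_iff.2 (by linarith))
  have h := integral_gaussianReal_rpow_le_shift (exp (-θ) * x) v
    (toNNReal_pos.2 hvar).ne' hα hf hf0 hfbd
  rwa [coe_toNNReal _ hvar.le] at h
end
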